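/- The sequence p_{n,d} defined for n ≥ j ≥ 2 and 1 ≤ d ≤ n-j+1 by the recurrence p_{n,d} = ((d-1)/(2n-3)) p_{n-1,d-1} + ((2n-3-d)/(2n-3)) p_{n-1,d}, with boundary values p_{n,1} = Γ(n-1)Γ(j-1/2)/(Γ(n-1/2)Γ(j-1)) and p_{n,n-j+1} = Γ(n-j+1)Γ(j-1/2)/(2^{n-j}Γ(n-1/2)), is given by p_{n,d} = [Γ(d)Γ(j-1/2)/Γ(n-1/2)] · Σ_{i=0}^{d-1} (-1)^i Γ(n - 1 - i/2) / (Γ(i+1)Γ(d-i)Γ(j - 1 - i/2)). -/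

import Mathlib

/-!
Since `Γ(d) / (Γ(i+1) Γ(d-i)) = C(d-1, i)`, the claimed value of `p n d` is `Γ(j-1/2) / Γ(n-1/2)`
times the alternating binomial sum `∑ (-1)^i C(d-1, i) Γ(n-1-i/2) / Γ(j-1-i/2)`. By
`Γ(x+1) = x Γ(x)` and `(d-1-i) C(d-1, i) = (d-1) C(d-2, i)` it satisfies the recurrence, and a
solution of the recurrence on the triangle `1 ≤ d ≤ n-j+1` is determined by its two boundary
columns. On the column `d = 1` only the term `i = 0` survives. On the column `d = n-j+1`,
`Γ(n-1-i/2) / Γ(j-1-i/2)` is a polynomial of degree `n-j` in `i` with leading coefficient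
`(-1/2)^(n-j)`, so the alternating sum is an `(n-j)`-th forward difference, equal to
`(n-j)! / 2^(n-j)`.
-/

open Finset Polynomial
open scoped Nat

theorem Polynomial.sum_range_neg_one_pow_mul_choose_mul_eval {R : Type*} [CommRing R]
    (P : R[X]) :
    ∑ k ∈ range (P.natDegree + 1), (-1) ^ k * P.natDegree.choose k * P.eval (k : R) =
      (-1) ^ P.natDegree * P.natDegree ! * P.leadingCoeff := by
  have h := congrFun P.fwdDiff_iter_degree_eq_factorial 0
  simp only [fwdDiff_iter_eq_sum_shift, zero_add, nsmul_eq_mul, mul_one, zsmul_eq_mul,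
    Int.cast_mul, Int.cast_pow, Int.cast_neg, Int.cast_one, Int.cast_natCast, Pi.smul_apply,
    smul_eq_mul, Pi.natCast_apply] at h
  rw [mul_assoc, mul_comm (_ !: R), ← h, mul_sum]
  refine sum_congr rfl fun k hk => ?_
  have hk : k ≤ P.natDegree := mem_range_succ_iff.mp hk
  rw [← mul_assoc, ← mul_assoc, ← pow_add,
    show P.natDegree + (P.natDegree - k) = k + 2 * (P.natDegree - k) by omega,
    pow_add, pow_mul, neg_one_sq, one_pow, mul_one]

theorem Real.Gamma_add_nat_div_Gamma_eq {y : ℝ} (m : ℕ) (h : 0 < y + m) :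
    Real.Gamma (y + m) / Real.Gamma y = (ascPochhammer ℝ m).eval y := by
  by_cases hy : ∃ k : ℕ, y = -k
  -- a pole of `Γ` with `k < m`: Mathlib's `Γ` is `0` there, as is the Pochhammer product
  · obtain ⟨k, rfl⟩ := hy
    have hk : k < m := by exact_mod_cast (show (k : ℝ) < m by linarith)
    rw [Real.Gamma_neg_nat_eq_zero, div_zero, ascPochhammer_eval_neg_coe_nat_of_lt hk]
  · push Not at hy
    rw [div_eq_iff (Real.Gamma_ne_zero hy)]
    clear h
    induction m with
    | zero => simp
    | succ m ih =>
      have hym : y + m ≠ 0 := fun h0 => hy m (by linarith)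
      rw [Nat.cast_succ, ← add_assoc, Real.Gamma_add_one hym, ih, ascPochhammer_succ_eval]
      ring

theorem sum_range_choose_succ_mul_sub {R : Type*} [CommRing R] (m : ℕ) (v : ℕ → R) :
    ∑ i ∈ range (m + 2), ((m + 1).choose i : R) * ((m : R) + 1 - i) * v i =
      (m + 1) * ∑ i ∈ range (m + 1), (m.choose i : R) * v i := by
  rw [sum_range_succ, Nat.cast_succ, sub_self, mul_zero, zero_mul, add_zero, mul_sum]
  refine sum_congr rfl fun i hi => ?_
  have hi : i ≤ m + 1 := by have := mem_range.mp hi; omega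
  have h := congrArg (Nat.cast : ℕ → R) (Nat.choose_mul_succ_eq m i)
  push_cast [hi] at h
  linear_combination (-v i) * h

noncomputable def binomialGammaSum (a : ℕ → ℝ) (x : ℝ) (m : ℕ) : ℝ :=
  ∑ i ∈ range (m + 1), (-1) ^ i * m.choose i * a i * Real.Gamma (x - i / 2)

theorem two_mul_binomialGammaSum_succ (a : ℕ → ℝ) {x : ℝ} {m : ℕ} (hx : (m : ℝ) + 1 < 2 * x) :
    2 * binomialGammaSum a (x + 1) (m + 1) =
      (m + 1) * binomialGammaSum a x m + (2 * x - 1 - m) * binomialGammaSum a x (m + 1) := by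
  have hGamma : ∀ i ∈ range (m + 2),
      2 * Real.Gamma (x + 1 - i / 2) = (2 * x - i) * Real.Gamma (x - i / 2) := by
    intro i hi
    have hi : (i : ℝ) ≤ m + 1 := by exact_mod_cast mem_range_succ_iff.mp hi
    rw [show x + 1 - i / 2 = (x - i / 2) + 1 by ring, Real.Gamma_add_one (by linarith)]
    ring
  calc 2 * binomialGammaSum a (x + 1) (m + 1)
      = ∑ i ∈ range (m + 2), (-1) ^ i * (m + 1).choose i * a i *
          ((2 * x - i) * Real.Gamma (x - i / 2)) := by
        rw [binomialGammaSum, mul_sum]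
        refine sum_congr rfl fun i hi => ?_
        rw [← hGamma i hi]
        ring
    _ = (2 * x - 1 - m) * binomialGammaSum a x (m + 1) +
          ∑ i ∈ range (m + 2), ((m + 1).choose i : ℝ) * ((m : ℝ) + 1 - i) *
            ((-1) ^ i * a i * Real.Gamma (x - i / 2)) := by
        rw [binomialGammaSum, mul_sum, ← sum_add_distrib]
        refine sum_congr rfl fun i _ => ?_
        ring
    _ = _ := by
        rw [sum_range_choose_succ_mul_sub, add_comm, binomialGammaSum]
        congr 2
        refine sum_congr rfl fun i _ => ?_
        ring

theorem binomialGammaSum_inv_Gamma_eq (y : ℝ) (m : ℕ) (h : 0 < 2 * y + m) :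
    binomialGammaSum (fun i => (Real.Gamma (y - i / 2))⁻¹) (y + m) m = m ! / 2 ^ m := by
  set P : ℝ[X] := (ascPochhammer ℝ m).comp (C (-1 / 2) * X + C y)
  have hlinear : (C (-1 / 2 : ℝ) * X + C y).natDegree = 1 := natDegree_linear (by norm_num)
  have hdeg : P.natDegree = m := by
    rw [natDegree_comp, ascPochhammer_natDegree, hlinear, mul_one]
  have hlead : P.leadingCoeff = (-1 / 2) ^ m := by
    rw [leadingCoeff_comp (by rw [hlinear]; exact one_ne_zero),
      (monic_ascPochhammer ℝ m).leadingCoeff, leadingCoeff_linear (by norm_num),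
      ascPochhammer_natDegree, one_mul]
  have hsum := P.sum_range_neg_one_pow_mul_choose_mul_eval
  rw [hdeg, hlead] at hsum
  calc binomialGammaSum (fun i => (Real.Gamma (y - i / 2))⁻¹) (y + m) m
      = ∑ i ∈ range (m + 1), (-1) ^ i * m.choose i * P.eval (i : ℝ) := by
        refine sum_congr rfl fun i hi => ?_
        have hi : (i : ℝ) ≤ m := by exact_mod_cast mem_range_succ_iff.mp hi
        rw [mul_assoc, inv_mul_eq_div, show y + m - i / 2 = (y - i / 2) + m by ring,
          Real.Gamma_add_nat_div_Gamma_eq m (by linarith), eval_comp]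
        congr 2
        simp only [eval_add, eval_mul, eval_C, eval_X]
        ring
    _ = m ! / 2 ^ m := by
        rw [hsum, mul_comm ((-1 : ℝ) ^ m), mul_assoc, ← mul_pow, div_eq_mul_inv _ ((2 : ℝ) ^ m),
          ← inv_pow]
        norm_num

theorem eqOn_triangle_of_recurrence (j : ℕ) (α β : ℕ → ℕ → ℝ) {p q : ℕ → ℕ → ℝ}
    (hp : ∀ n d : ℕ, j < n → 2 ≤ d → d ≤ n - j →
      p n d = α n d * p (n - 1) (d - 1) + β n d * p (n - 1) d)
    (hq : ∀ n d : ℕ, j < n → 2 ≤ d → d ≤ n - j →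
      q n d = α n d * q (n - 1) (d - 1) + β n d * q (n - 1) d)
    (hleft : ∀ n : ℕ, j ≤ n → p n 1 = q n 1)
    (hright : ∀ n : ℕ, j ≤ n → p n (n - j + 1) = q n (n - j + 1)) :
    ∀ n d : ℕ, j ≤ n → 1 ≤ d → d ≤ n - j + 1 → p n d = q n d := by
  intro n
  induction n with
  | zero =>
    intro d hn hd hdn
    obtain rfl : d = 1 := by omega
    exact hleft 0 hn
  | succ n ih =>
    intro d hn hd hdn
    rcases Nat.lt_or_ge d 2 with hd1 | hd2
    · obtain rfl : d = 1 := by omega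
      exact hleft _ hn
    rcases Nat.lt_or_ge (n + 1 - j) d with hdiag | hinner
    · obtain rfl : d = n + 1 - j + 1 := by omega
      exact hright _ hn
    rw [hp _ _ (by omega) hd2 hinner, hq _ _ (by omega) hd2 hinner, Nat.add_sub_cancel,
      ih (d - 1) (by omega) (by omega) (by omega), ih d (by omega) (by omega) (by omega)]

noncomputable def portClosedForm (j n d : ℕ) : ℝ :=
  Real.Gamma (d : ℝ) * Real.Gamma ((j : ℝ) - 1 / 2) / Real.Gamma ((n : ℝ) - 1 / 2) *
    ∑ i ∈ range d, (-1 : ℝ) ^ i * Real.Gamma ((n : ℝ) - 1 - (i : ℝ) / 2) /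
      (Real.Gamma ((i : ℝ) + 1) * Real.Gamma ((d : ℝ) - (i : ℝ)) *
        Real.Gamma ((j : ℝ) - 1 - (i : ℝ) / 2))

theorem portClosedForm_succ (j n m : ℕ) :
    portClosedForm j n (m + 1) = Real.Gamma ((j : ℝ) - 1 / 2) / Real.Gamma ((n : ℝ) - 1 / 2) *
      binomialGammaSum (fun i => (Real.Gamma ((j : ℝ) - 1 - i / 2))⁻¹) ((n : ℝ) - 1) m := by
  rw [portClosedForm, binomialGammaSum, mul_sum, mul_sum]
  refine sum_congr rfl fun i hi => ?_
  have hi : i ≤ m := mem_range_succ_iff.mp hi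
  have hchoose : Real.Gamma ((m + 1 : ℕ) : ℝ) / (Real.Gamma ((i : ℝ) + 1) *
      Real.Gamma (((m + 1 : ℕ) : ℝ) - i)) = m.choose i := by
    rw [Nat.cast_choose ℝ hi, ← Real.Gamma_nat_eq_factorial, ← Real.Gamma_nat_eq_factorial,
      ← Real.Gamma_nat_eq_factorial]
    push_cast [hi]
    ring_nf
  rw [← hchoose]
  field_simp

theorem portClosedForm_one (j n : ℕ) :
    portClosedForm j n 1 = Real.Gamma ((n : ℝ) - 1) * Real.Gamma ((j : ℝ) - 1 / 2) /
      (Real.Gamma ((n : ℝ) - 1 / 2) * Real.Gamma ((j : ℝ) - 1)) := by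
  simp [portClosedForm]
  ring

theorem portClosedForm_rec {j n d : ℕ} (hj : 1 ≤ j) (hn : j < n) (hd : 2 ≤ d) (hdn : d ≤ n - j) :
    portClosedForm j n d = ((d : ℝ) - 1) / (2 * (n : ℝ) - 3) * portClosedForm j (n - 1) (d - 1) +
      (2 * (n : ℝ) - 3 - (d : ℝ)) / (2 * (n : ℝ) - 3) * portClosedForm j (n - 1) d := by
  obtain ⟨k, rfl⟩ : ∃ k, n = k + 1 := ⟨n - 1, by omega⟩
  obtain ⟨m, rfl⟩ : ∃ m, d = m + 1 + 1 := ⟨d - 2, by omega⟩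
  have hm : (m : ℝ) + 2 ≤ k := by exact_mod_cast (show m + 2 ≤ k by omega)
  have hGamma :
      Real.Gamma ((k : ℝ) + 1 / 2) = ((k : ℝ) - 1 / 2) * Real.Gamma ((k : ℝ) - 1 / 2) := by
    rw [← Real.Gamma_add_one (by linarith)]
    ring_nf
  have hpos : 0 < Real.Gamma ((k : ℝ) - 1 / 2) := Real.Gamma_pos_of_pos (by linarith)
  simp only [Nat.add_sub_cancel, portClosedForm_succ]
  push_cast
  rw [show (k : ℝ) + 1 - 1 / 2 = k + 1 / 2 by ring, hGamma,
    show (k : ℝ) + 1 - 1 = k - 1 + 1 by ring, show 2 * ((k : ℝ) + 1) - 3 = 2 * k - 1 by ring]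
  set a : ℕ → ℝ := fun i => (Real.Gamma ((j : ℝ) - 1 - i / 2))⁻¹
  have hstep := two_mul_binomialGammaSum_succ a (x := (k : ℝ) - 1) (m := m) (by linarith)
  generalize Real.Gamma ((k : ℝ) - 1 / 2) = G at hpos ⊢
  generalize Real.Gamma ((j : ℝ) - 1 / 2) = c
  field_simp
  rw [div_left_inj' (by linarith)]
  linear_combination c * hstep

theorem portClosedForm_diag {j n : ℕ} (hj : 2 ≤ j) (hn : j ≤ n) :
    portClosedForm j n (n - j + 1) = Real.Gamma ((n : ℝ) - (j : ℝ) + 1) *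
      Real.Gamma ((j : ℝ) - 1 / 2) / (2 ^ (n - j) * Real.Gamma ((n : ℝ) - 1 / 2)) := by
  have hcast : ((n - j : ℕ) : ℝ) = n - j := Nat.cast_sub hn
  have hjR : (2 : ℝ) ≤ j := by exact_mod_cast hj
  rw [portClosedForm_succ, show (n : ℝ) - 1 = (j - 1) + (n - j : ℕ) by rw [hcast]; ring,
    binomialGammaSum_inv_Gamma_eq _ _ (by linarith [(n - j).cast_nonneg (α := ℝ)]),
    ← Real.Gamma_nat_eq_factorial, hcast]
  ring

open Finset in
/-- Closed-form solution of the two-dimensional recurrence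
`p_{n,d} = ((d-1)/(2n-3)) p_{n-1,d-1} + ((2n-3-d)/(2n-3)) p_{n-1,d}` (for interior
values `2 ≤ d ≤ n-j`), with boundary values
`p_{n,1} = Γ(n-1)Γ(j-1/2)/(Γ(n-1/2)Γ(j-1))` and
`p_{n,n-j+1} = Γ(n-j+1)Γ(j-1/2)/(2^(n-j)Γ(n-1/2))`, for fixed `j ≥ 2`:
`p_{n,d} = [Γ(d)Γ(j-1/2)/Γ(n-1/2)] Σ_{i=0}^{d-1} (-1)^i Γ(n-1-i/2)/(Γ(i+1)Γ(d-i)Γ(j-1-i/2))`. -/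
theorem port_recurrence_closed_form (j : ℕ) (hj : 2 ≤ j) (p : ℕ → ℕ → ℝ)
    (hrec : ∀ n d : ℕ, j < n → 2 ≤ d → d ≤ n - j →
      p n d = ((d : ℝ) - 1) / (2 * (n : ℝ) - 3) * p (n - 1) (d - 1) +
        (2 * (n : ℝ) - 3 - (d : ℝ)) / (2 * (n : ℝ) - 3) * p (n - 1) d)
    (hbase1 : ∀ n : ℕ, j ≤ n →
      p n 1 = Real.Gamma ((n : ℝ) - 1) * Real.Gamma ((j : ℝ) - 1 / 2) /
        (Real.Gamma ((n : ℝ) - 1 / 2) * Real.Gamma ((j : ℝ) - 1)))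
    (hbase2 : ∀ n : ℕ, j ≤ n →
      p n (n - j + 1) = Real.Gamma ((n : ℝ) - (j : ℝ) + 1) * Real.Gamma ((j : ℝ) - 1 / 2) /
        (2 ^ (n - j) * Real.Gamma ((n : ℝ) - 1 / 2))) :
    ∀ n d : ℕ, j ≤ n → 1 ≤ d → d ≤ n - j + 1 →
      p n d = Real.Gamma (d : ℝ) * Real.Gamma ((j : ℝ) - 1 / 2) / Real.Gamma ((n : ℝ) - 1 / 2) *
        ∑ i ∈ range d, (-1 : ℝ) ^ i * Real.Gamma ((n : ℝ) - 1 - (i : ℝ) / 2) /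
          (Real.Gamma ((i : ℝ) + 1) * Real.Gamma ((d : ℝ) - (i : ℝ)) *
            Real.Gamma ((j : ℝ) - 1 - (i : ℝ) / 2)) :=
  eqOn_triangle_of_recurrence j _ _ hrec
    (fun _ _ hn hd hdn => portClosedForm_rec (by omega) hn hd hdn)
    (fun n hn => (hbase1 n hn).trans (portClosedForm_one j n).symm)
    (fun n hn => (hbase2 n hn).trans (portClosedForm_diag hj hn).symm)
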